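/- For every rational c ∉ {0, 1, −1}, the second dynatomic polynomial of φ_c(x) = ((c + c² − c³)x − c²)/((c³ − c² − c + 1)x² − (c³ − c² − c)x − c²) is a quadratic polynomial in x with nonzero discriminant; consequently, φ_c has either zero or exactly two rational points of exact period 2, and if it has one rational 2-periodic point then it has exactly two. -/

import Mathlib

noncomputable section
open Polynomial

/-- The quadratic rational map `φ_c` on `ℙ¹(ℚ) = ℚ ∪ {∞}` (`∞` encoded as `none`). -/
def phiC4 (c : ℚ) : Option ℚ → Option ℚ
  | none => some 0
  | some x =>
      if (c^3 - c^2 - c + 1)*x^2 - (c^3 - c^2 - c)*x - c^2 = 0 then none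
      else some (((c + c^2 - c^3)*x - c^2) /
        ((c^3 - c^2 - c + 1)*x^2 - (c^3 - c^2 - c)*x - c^2))

/-- Numerator of `φ_c`. -/
def N₁ (c : ℚ) : ℚ[X] := C (c + c^2 - c^3) * X - C (c^2)

/-- Denominator of `φ_c`. -/
def D₁ (c : ℚ) : ℚ[X] := C (c^3 - c^2 - c + 1) * X^2 - C (c^3 - c^2 - c) * X - C (c^2)

/-- Numerator of `φ_c²` (obtained by substituting `φ_c` into itself and clearing
denominators, using that the numerator of `φ_c` is linear). -/
def N₂ (c : ℚ) : ℚ[X] := D₁ c * (C (c + c^2 - c^3) * N₁ c + C (-c^2) * D₁ c)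

/-- Denominator of `φ_c²`. -/
def D₂ (c : ℚ) : ℚ[X] :=
  C (c^3 - c^2 - c + 1) * (N₁ c)^2 - C (c^3 - c^2 - c) * N₁ c * D₁ c - C (c^2) * (D₁ c)^2

/-- The second dynatomic polynomial `Φ₂ = (X·D₂ − N₂)/(X·D₁ − N₁)` of `φ_c`. -/
def dyn2 (c : ℚ) : ℚ[X] := (X * D₂ c - N₂ c) / (X * D₁ c - N₁ c)

/-!
Clearing denominators in `φ_c²(x) = x` gives `x·D₂ − N₂ = (x·D₁ − N₁)·Q` for an explicit
quadratic `Q` with discriminant `c⁴(c − 1)²(c + 1)²(c⁴ − 4c + 4) ≠ 0`. Since `φ_c²(∞) = 1`, a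
point of exact period 2 is finite, and not being fixed it is a root of `Q`; so there are at most
two of them, and as `φ_c` swaps them without fixed points there are none or exactly two.
-/

theorem Function.exact_period_two_eq_empty_or_pair {α : Type*} (f : α → α)
    (h : {P | f^[2] P = P ∧ f P ≠ P}.encard ≤ 2) :
    {P | f^[2] P = P ∧ f P ≠ P} = ∅ ∨
      ∃ P₁ P₂ : α, P₁ ≠ P₂ ∧ {P | f^[2] P = P ∧ f P ≠ P} = {P₁, P₂} := by
  refine (Set.eq_empty_or_nonempty _).imp id fun ⟨P, hP2, hP1⟩ => ⟨P, f P, hP1.symm, ?_⟩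
  have hfP : f P ∈ {P | f^[2] P = P ∧ f P ≠ P} :=
    ⟨congrArg f hP2, fun h => hP1 (hP2.symm.trans h).symm⟩
  have hsub : {P, f P} ⊆ {P | f^[2] P = P ∧ f P ≠ P} :=
    Set.insert_subset ⟨hP2, hP1⟩ (Set.singleton_subset_iff.2 hfP)
  refine (Set.Finite.eq_of_subset_of_encard_le (Set.toFinite _) hsub ?_).symm
  rwa [Set.encard_pair hP1.symm]

def dyn2Quadratic (c : ℚ) : ℚ[X] :=
  C (-(c^2) * (c^3 - c^2 - c + 1)) * X^2 + C (c^2*(c^2-1)*(c^2-2)) * X + C (c^3*(c^2-1))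

section Algebra

variable (c : ℚ)

theorem X_mul_D₂_sub_N₂_eq : X * D₂ c - N₂ c = (X * D₁ c - N₁ c) * dyn2Quadratic c := by
  simp only [N₂, D₂, N₁, D₁, dyn2Quadratic, map_sub, map_add, map_mul, map_pow, map_neg,
    map_one, map_ofNat]
  ring

variable {c}

theorem X_mul_D₁_sub_N₁_ne_zero (hc0 : c ≠ 0) : X * D₁ c - N₁ c ≠ 0 := by
  intro h
  simpa [N₁, D₁, hc0] using congrArg (eval 0) h

theorem dyn2_eq_dyn2Quadratic (hc0 : c ≠ 0) : dyn2 c = dyn2Quadratic c :=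
  (EuclideanDomain.eq_div_of_mul_eq_right (X_mul_D₁_sub_N₁_ne_zero hc0)
    (X_mul_D₂_sub_N₂_eq c).symm).symm

theorem dyn2Quadratic_leadingCoeff_ne_zero (hc0 : c ≠ 0) (hc1 : c ≠ 1) (hcm1 : c ≠ -1) :
    -(c^2) * (c^3 - c^2 - c + 1) ≠ 0 := by
  have hfac : c^3 - c^2 - c + 1 = (c - 1)^2 * (c + 1) := by ring
  rw [hfac]
  have := sub_ne_zero.2 hc1
  have : c + 1 ≠ 0 := fun h => hcm1 (eq_neg_of_add_eq_zero_left h)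
  exact mul_ne_zero (neg_ne_zero.2 (by positivity)) (by positivity)

theorem natDegree_dyn2Quadratic (hc0 : c ≠ 0) (hc1 : c ≠ 1) (hcm1 : c ≠ -1) :
    (dyn2Quadratic c).natDegree = 2 :=
  natDegree_quadratic (dyn2Quadratic_leadingCoeff_ne_zero hc0 hc1 hcm1)

theorem discrim_dyn2Quadratic_ne_zero (hc0 : c ≠ 0) (hc1 : c ≠ 1) (hcm1 : c ≠ -1) :
    discrim ((dyn2Quadratic c).coeff 2) ((dyn2Quadratic c).coeff 1)
      ((dyn2Quadratic c).coeff 0) ≠ 0 := by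
  have hfac : discrim ((dyn2Quadratic c).coeff 2) ((dyn2Quadratic c).coeff 1)
      ((dyn2Quadratic c).coeff 0)
        = c^4 * (c - 1)^2 * (c + 1)^2 * ((c^2 - 1)^2 + 2 * (c - 1)^2 + 1) := by
    simp only [dyn2Quadratic, discrim, coeff_add, coeff_C_mul, coeff_X_pow, coeff_X, coeff_C]
    norm_num
    ring
  rw [hfac]
  have := sub_ne_zero.2 hc1
  have : c + 1 ≠ 0 := fun h => hcm1 (eq_neg_of_add_eq_zero_left h)
  positivity

end Algebra

section Dynamics

variable {c : ℚ}

theorem eval_D₁ (y : ℚ) :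
    (D₁ c).eval y = (c^3 - c^2 - c + 1) * y^2 - (c^3 - c^2 - c) * y - c^2 := by
  simp [D₁]

theorem eval_N₁ (y : ℚ) : (N₁ c).eval y = (c + c^2 - c^3) * y - c^2 := by
  simp [N₁]

theorem phiC4_some (x : ℚ) : phiC4 c (some x) =
    if (D₁ c).eval x = 0 then none else some ((N₁ c).eval x / (D₁ c).eval x) := by
  simp [phiC4, eval_N₁, eval_D₁]

theorem phiC4_iterate_two_none (hc0 : c ≠ 0) : (phiC4 c)^[2] none = some 1 := by
  show phiC4 c (some 0) = some 1
  simp [phiC4_some, N₁, D₁, hc0]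

theorem eval_D₁_div {x : ℚ} (hx : (D₁ c).eval x ≠ 0) :
    (D₁ c).eval ((N₁ c).eval x / (D₁ c).eval x) = (D₂ c).eval x / (D₁ c).eval x ^ 2 := by
  rw [eval_D₁, eq_div_iff (pow_ne_zero 2 hx)]
  simp only [D₂, eval_sub, eval_mul, eval_pow, eval_C]
  field_simp

theorem eval_N₁_div {x : ℚ} (hx : (D₁ c).eval x ≠ 0) :
    (N₁ c).eval ((N₁ c).eval x / (D₁ c).eval x) = (N₂ c).eval x / (D₁ c).eval x ^ 2 := by
  rw [eval_N₁, eq_div_iff (pow_ne_zero 2 hx)]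
  simp only [N₂, eval_add, eval_mul, eval_C]
  field_simp
  ring

theorem eval_D₁_ne_zero_of_iterate_two (hc0 : c ≠ 0) {x : ℚ}
    (h : (phiC4 c)^[2] (some x) = some x) : (D₁ c).eval x ≠ 0 := by
  intro hx
  change phiC4 c (phiC4 c (some x)) = some x at h
  rw [phiC4_some, if_pos hx] at h
  have hx0 : some 0 = some x := h
  simp [← Option.some_inj.1 hx0, eval_D₁, hc0] at hx

theorem isRoot_X_mul_D₂_sub_N₂_of_iterate_two (hc0 : c ≠ 0) {x : ℚ}
    (h : (phiC4 c)^[2] (some x) = some x) : (X * D₂ c - N₂ c).IsRoot x := by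
  have hx := eval_D₁_ne_zero_of_iterate_two hc0 h
  have hφx : phiC4 c (some x) = some ((N₁ c).eval x / (D₁ c).eval x) := by
    rw [phiC4_some, if_neg hx]
  have h2 : phiC4 c (some ((N₁ c).eval x / (D₁ c).eval x)) = some x := by
    rw [← hφx]; exact h
  rw [phiC4_some, eval_D₁_div hx, eval_N₁_div hx] at h2
  have hD₂ : (D₂ c).eval x ≠ 0 := by
    intro h0
    simp [h0] at h2
  rw [if_neg (div_ne_zero hD₂ (pow_ne_zero 2 hx)), Option.some_inj,
    div_div_div_cancel_right₀ (pow_ne_zero 2 hx), div_eq_iff hD₂] at h2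
  simp [h2]

theorem isRoot_dyn2Quadratic_of_exact_period_two (hc0 : c ≠ 0) {x : ℚ}
    (h2 : (phiC4 c)^[2] (some x) = some x) (h1 : phiC4 c (some x) ≠ some x) :
    (dyn2Quadratic c).IsRoot x := by
  have hx := eval_D₁_ne_zero_of_iterate_two hc0 h2
  have hroot := isRoot_X_mul_D₂_sub_N₂_of_iterate_two hc0 h2
  rw [X_mul_D₂_sub_N₂_eq, IsRoot, eval_mul, mul_eq_zero] at hroot
  refine hroot.resolve_left fun h0 => h1 ?_
  simp only [eval_sub, eval_mul, eval_X, sub_eq_zero] at h0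
  simp [phiC4_some, hx, ← h0]

theorem encard_exact_period_two_phiC4_le (hc0 : c ≠ 0) (hc1 : c ≠ 1) (hcm1 : c ≠ -1) :
    {P | (phiC4 c)^[2] P = P ∧ phiC4 c P ≠ P}.encard ≤ 2 := by
  have hne : dyn2Quadratic c ≠ 0 := fun h => by
    simpa [h] using natDegree_dyn2Quadratic hc0 hc1 hcm1
  have hsub : {P | (phiC4 c)^[2] P = P ∧ phiC4 c P ≠ P} ⊆
      some '' ((dyn2Quadratic c).roots.toFinset : Set ℚ) := by
    rintro (_ | x) ⟨h2, h1⟩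
    · simp [phiC4_iterate_two_none hc0] at h2
    · exact ⟨x, by simpa [hne] using isRoot_dyn2Quadratic_of_exact_period_two hc0 h2 h1, rfl⟩
  calc _ ≤ _ := Set.encard_le_encard hsub
    _ ≤ ((dyn2Quadratic c).roots.toFinset : Set ℚ).encard := Set.encard_image_le _ _
    _ ≤ (dyn2Quadratic c).natDegree := by
      rw [Set.encard_coe_eq_coe_finsetCard, Nat.cast_le]
      exact (Multiset.toFinset_card_le _).trans (card_roots' _)
    _ = 2 := by rw [natDegree_dyn2Quadratic hc0 hc1 hcm1]; rfl

end Dynamics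

/-- For `c ∉ {0, ±1}`, the second dynatomic polynomial of `φ_c` is a quadratic with
nonzero discriminant; consequently `φ_c` has either zero or exactly two rational points
of exact period 2 (so if it has one it has exactly two). -/
theorem stmt_19 (c : ℚ) (hc0 : c ≠ 0) (hc1 : c ≠ 1) (hcm1 : c ≠ -1) :
    (X * D₁ c - N₁ c) ∣ (X * D₂ c - N₂ c) ∧
    (dyn2 c).natDegree = 2 ∧
    (dyn2 c).coeff 1 ^ 2 - 4 * (dyn2 c).coeff 2 * (dyn2 c).coeff 0 ≠ 0 ∧
    ({P : Option ℚ | (phiC4 c)^[2] P = P ∧ phiC4 c P ≠ P} = (∅ : Set (Option ℚ)) ∨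
      ∃ P₁ P₂ : Option ℚ, P₁ ≠ P₂ ∧
        {P : Option ℚ | (phiC4 c)^[2] P = P ∧ phiC4 c P ≠ P} = {P₁, P₂}) := by
  rw [dyn2_eq_dyn2Quadratic hc0]
  exact ⟨⟨_, X_mul_D₂_sub_N₂_eq c⟩, natDegree_dyn2Quadratic hc0 hc1 hcm1,
    discrim_dyn2Quadratic_ne_zero hc0 hc1 hcm1,
    Function.exact_period_two_eq_empty_or_pair _ (encard_exact_period_two_phiC4_le hc0 hc1 hcm1)⟩

end
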